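/- For all σ ∈ {0,1}^k, T_k(σ) := Trace(M_k(σ)) ≤ g_k(σ) := h_k(σ) + h_k(1-σ), i.e., the Farey chain energy numerator is bounded above by the grand canonical function of the number-theoretical spin chain. -/
import Mathlib


open Matrix

namespace Farey

def A : Matrix (Fin 2) (Fin 2) ℤ := !![1, 0; 1, 1]
def B : Matrix (Fin 2) (Fin 2) ℤ := !![1, 1; 0, 1]

/-- The Farey spin chain matrix product: `M 0 = 1`,
`M (k+1) σ = A^(1-σ_(k+1)) B^(σ_(k+1)) * M k (σ_1,…,σ_k)`. -/
def M : (k : ℕ) → (Fin k → Bool) → Matrix (Fin 2) (Fin 2) ℤ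
  | 0, _ => 1
  | k + 1, σ => (if σ (Fin.last k) then B else A) * M k (fun i => σ i.castSucc)

/-- The canonical energy numerator of the number-theoretical spin chain:
`h 0 = 1`, `h (k+1) (σ, s) = h k σ + s * h k (1-σ)`. -/
def h : (k : ℕ) → (Fin k → Bool) → ℕ
  | 0, _ => 1
  | k + 1, σ =>
      h k (fun i => σ i.castSucc) +
        if σ (Fin.last k) then h k (fun i => !σ i.castSucc) else 0

lemma key (k : ℕ) (σ : Fin k → Bool) :
    (∀ i j, 0 ≤ M k σ i j) ∧
    M k σ 0 0 + M k σ 0 1 = (h k σ : ℤ) ∧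
    M k σ 1 0 + M k σ 1 1 = (h k (fun i => !σ i) : ℤ) := by
  induction k with
  | zero =>
    refine ⟨fun i j => ?_, ?_, ?_⟩ <;>
      [fin_cases i <;> fin_cases j; skip; skip] <;>
      simp [M, h, Matrix.one_apply]
  | succ k ih =>
    obtain ⟨hpos, h0, h1⟩ := ih (fun i => σ i.castSucc)
    have hnot : (fun i : Fin k => !!σ i.castSucc) = fun i => σ i.castSucc := by
      funext i; simp
    by_cases hs : σ (Fin.last k) <;>
    · refine ⟨fun i j => ?_, ?_, ?_⟩
      · fin_cases i <;> fin_cases j <;>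
          simp [M, hs, A, B, Matrix.mul_apply, Fin.sum_univ_two] <;>
          first
            | exact hpos _ _
            | exact add_nonneg (hpos _ _) (hpos _ _)
      · simp [M, h, hs, A, B, Matrix.mul_apply, Fin.sum_univ_two, hnot]
        linarith
      · simp [M, h, hs, A, B, Matrix.mul_apply, Fin.sum_univ_two, hnot]
        linarith

/-- The Farey trace is bounded by the grand canonical function:
`T_k(σ) ≤ h_k(σ) + h_k(1-σ)`. -/
theorem trace_M_le (k : ℕ) (σ : Fin k → Bool) :
    (M k σ).trace ≤ (h k σ : ℤ) + (h k (fun i => !σ i) : ℤ) := by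
  obtain ⟨hpos, h0, h1⟩ := key k σ
  rw [Matrix.trace_fin_two]
  linarith [hpos 0 1, hpos 1 0]

end Farey
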